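/- arXiv:2104.08460 — 10 statements merged into one kernel-verified Lean document; each statement's English description precedes it below -/
import Mathlib

section
/- The function x ↦ φ_R(x) is differentiable at x = x* and its derivative there equals (R³/(n·d²))·(d/R − m)·((m+n) − d/R). -/
/-- φ_R is differentiable at x = x* = (1/n)(d/R − m) with derivative
(R³/(n d²))(d/R − m)((m+n) − d/R). -/
theorem stmt_3 (m n : ℕ) (hm : 0 < m) (hn : 0 < n) (d R : ℝ) (hd : 0 < d) (hR : 0 < R) :
    HasDerivAt
      (fun x : ℝ => (x * (1 - x) / ((m : ℝ) + n * x)) * (R - d / ((m : ℝ) + n * x)))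
      (R ^ 3 / ((n : ℝ) * d ^ 2) * (d / R - m) * (((m : ℝ) + n) - d / R))
      (1 / (n : ℝ) * (d / R - m)) := by
  set c : ℝ := 1 / (n : ℝ) * (d / R - m) with hc
  have hn' : (n : ℝ) ≠ 0 := by positivity
  have hR' : R ≠ 0 := ne_of_gt hR
  have hd' : d ≠ 0 := ne_of_gt hd
  have hg : (m : ℝ) + n * c = d / R := by
    rw [hc]; field_simp; ring
  have hgne : (m : ℝ) + n * c ≠ 0 := by
    rw [hg]; positivity
  have hden : HasDerivAt (fun x : ℝ => (m : ℝ) + n * x) (n : ℝ) c := by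
    simpa using ((hasDerivAt_id c).const_mul (n : ℝ)).const_add (m : ℝ)
  have hnum : HasDerivAt (fun x : ℝ => x * (1 - x)) (1 * (1 - c) + c * (-1)) c :=
    (hasDerivAt_id c).mul ((hasDerivAt_id c).const_sub 1)
  have hu := hnum.div hden hgne
  have hv : HasDerivAt (fun x : ℝ => R - d / ((m : ℝ) + n * x))
      (-((0 * ((m : ℝ) + n * c) - d * n) / ((m : ℝ) + n * c) ^ 2)) c :=
    (((hasDerivAt_const c d).div hden hgne).const_sub R)
  have h := hu.mul hv
  convert h using 1
  case e'_4 => rfl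
  case e'_5 => rfl
  case e'_8 => rfl
  simp only [Pi.div_apply]
  rw [hg]
  have hc1 : c = (d / R - m) / n := by rw [hc]; ring
  rw [hc1]
  field_simp
  ring
end

section
/- If R/d < 1/(m+n), then the derivative of φ_R at x = 0 is strictly negative, the derivative of φ_R at x = 1 is strictly positive, and the derivative of φ_R at x = x* is strictly negative (so x = 0 and x = x* are asymptotically stable equilibria of ẋ = φ_R(x) and x = 1 is unstable). -/
lemma phi_hasDerivAt (m n d R x : ℝ) (hg : m + n * x ≠ 0) :
    HasDerivAt (fun x : ℝ => (x * (1 - x) / (m + n * x)) * (R - d / (m + n * x)))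
      (((1 - 2*x) * (m + n*x) - x*(1-x)*n) / (m + n*x)^2 * (R - d/(m+n*x))
        + (x*(1-x)/(m+n*x)) * (d*n/(m+n*x)^2)) x := by
  have hgd : HasDerivAt (fun x : ℝ => m + n * x) n x := by
    simpa using ((hasDerivAt_id x).const_mul n).const_add m
  have h1 : HasDerivAt (fun x : ℝ => x * (1 - x)) (1 - 2*x) x := by
    have := (hasDerivAt_id x).mul ((hasDerivAt_id x).const_sub 1)
    refine this.congr_deriv ?_
    simp only [id]; ring
  have hdiv := h1.div hgd hg
  have h2 : HasDerivAt (fun x : ℝ => R - d / (m + n * x)) (d*n/(m+n*x)^2) x := by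
    have := ((hasDerivAt_const x d).div hgd hg).const_sub R
    refine this.congr_deriv ?_
    ring
  have := hdiv.mul h2
  exact this

/-- If R/d < 1/(m+n), then φ_R'(0) < 0, φ_R'(1) > 0, and φ_R'(x*) < 0. -/
theorem stmt_4 (m n : ℕ) (hm : 0 < m) (hn : 0 < n) (d R : ℝ) (hd : 0 < d) (hR : 0 < R)
    (h : R / d < 1 / ((m : ℝ) + n)) :
    deriv (fun x : ℝ => (x * (1 - x) / ((m : ℝ) + n * x)) * (R - d / ((m : ℝ) + n * x))) 0 < 0 ∧
    0 < deriv (fun x : ℝ => (x * (1 - x) / ((m : ℝ) + n * x)) * (R - d / ((m : ℝ) + n * x))) 1 ∧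
    deriv (fun x : ℝ => (x * (1 - x) / ((m : ℝ) + n * x)) * (R - d / ((m : ℝ) + n * x)))
      (1 / (n : ℝ) * (d / R - m)) < 0 := by
  have hm' : (0:ℝ) < m := by exact_mod_cast hm
  have hn' : (0:ℝ) < n := by exact_mod_cast hn
  have hmn : (0:ℝ) < (m:ℝ) + n := by linarith
  rw [div_lt_div_iff₀ hd hmn] at h
  -- h : R * (m + n) < d * 1
  have key : R * ((m:ℝ) + n) < d := by linarith
  refine ⟨?_, ?_, ?_⟩
  · have hg : (m:ℝ) + n * 0 ≠ 0 := by simp; linarith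
    rw [(phi_hasDerivAt m n d R 0 hg).deriv]
    have : ((1 - 2*(0:ℝ)) * ((m:ℝ) + n*0) - 0*(1-0)*n) / ((m:ℝ) + n*0)^2 * (R - d/((m:ℝ)+n*0))
        + (0*(1-(0:ℝ))/((m:ℝ)+n*0)) * (d*n/((m:ℝ)+n*0)^2) = (R - d/m)/m := by
      field_simp; ring
    rw [this]
    apply div_neg_of_neg_of_pos _ hm'
    have : R * m < d := by nlinarith
    rw [sub_neg, lt_div_iff₀ hm']; linarith
  · have hg : (m:ℝ) + n * 1 ≠ 0 := by positivity
    rw [(phi_hasDerivAt m n d R 1 hg).deriv]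
    have : ((1 - 2*(1:ℝ)) * ((m:ℝ) + n*1) - 1*(1-1)*n) / ((m:ℝ) + n*1)^2 * (R - d/((m:ℝ)+n*1))
        + (1*(1-(1:ℝ))/((m:ℝ)+n*1)) * (d*n/((m:ℝ)+n*1)^2) = (d/((m:ℝ)+n) - R)/((m:ℝ)+n) := by
      field_simp; ring
    rw [this]
    apply div_pos _ hmn
    rw [sub_pos, lt_div_iff₀ hmn]; linarith
  · set x := 1 / (n:ℝ) * (d / R - m) with hxdef
    have hgx : (m:ℝ) + n * x = d / R := by
      rw [hxdef]; field_simp; ring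
    have hg : (m:ℝ) + n * x ≠ 0 := by rw [hgx]; positivity
    rw [(phi_hasDerivAt m n d R x hg).deriv, hgx]
    have hz : R - d / (d / R) = 0 := by field_simp; ring
    rw [hz, mul_zero, zero_add]
    have hx1 : 1 < x := by
      rw [hxdef, one_div, inv_mul_eq_div, lt_div_iff₀ hn', one_mul]
      have hdr : (m:ℝ) + n < d / R := by rw [lt_div_iff₀ hR]; nlinarith
      linarith
    apply mul_neg_of_neg_of_pos
    · apply div_neg_of_neg_of_pos _ (by positivity)
      nlinarith
    · positivity
end

section
/- Suppose R > d/m. If x : [0,∞) → [0,1] is differentiable and satisfies x'(t) = φ_R(x(t)) for all t ≥ 0 with x(0) ∈ (0,1], then x(t) → 1 as t → ∞ (i.e., the basin of attraction of the equilibrium x = 1 contains (0,1]). -/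
/-!
Along a trajectory in `[0,1]` the vector field `φ_R` is nonnegative, so `x` is nondecreasing;
when `R > d/m` it is moreover positive on `(0,1)`, because `d/(m + n x) ≤ d/m < R`. If `x` stayed
below some `b' < 1`, then `x` would stay in `[x 0, b'] ⊂ (0,1)`, where the continuous field
`φ_R` has a positive minimum `c`, so `x t ≥ x 0 + c t` would be unbounded.
-/

open Set Filter Topology

theorem mul_sub_le_sub_of_hasDerivAt_Ici {f f' : ℝ → ℝ} {C : ℝ}
    (hf : ∀ t, 0 ≤ t → HasDerivAt f (f' t) t) (hC : ∀ t, 0 ≤ t → C ≤ f' t)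
    {s t : ℝ} (hs : 0 ≤ s) (hst : s ≤ t) : C * (t - s) ≤ f t - f s := by
  refine (convex_Ici 0).mul_sub_le_image_sub_of_le_deriv
    (fun u hu => (hf u hu).continuousAt.continuousWithinAt) (fun u hu => ?_) (fun u hu => ?_)
    s hs t (hs.trans hst) hst
  all_goals rw [interior_Ici] at hu
  · exact (hf u hu.le).differentiableAt.differentiableWithinAt
  · exact (hf u hu.le).deriv ▸ hC u hu.le

theorem tendsto_right_endpoint_of_hasDerivAt {F x : ℝ → ℝ} {a b : ℝ}
    (hFc : ContinuousOn F (Ioo a b)) (hF0 : ∀ y ∈ Icc a b, 0 ≤ F y)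
    (hFpos : ∀ y ∈ Ioo a b, 0 < F y) (hmem : ∀ t, 0 ≤ t → x t ∈ Icc a b)
    (hode : ∀ t, 0 ≤ t → HasDerivAt x (F (x t)) t) (hx0 : a < x 0) :
    Tendsto x atTop (𝓝 b) := by
  have hmono : ∀ s t, 0 ≤ s → s ≤ t → x s ≤ x t := fun s t hs hst => by
    simpa using mul_sub_le_sub_of_hasDerivAt_Ici hode (fun t ht => hF0 _ (hmem t ht)) hs hst
  refine tendsto_order.2 ⟨fun b' hb' => ?_,
    fun b' hb' => eventually_atTop.2 ⟨0, fun t ht => (hmem t ht).2.trans_lt hb'⟩⟩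
  by_contra hnot
  have hle : ∀ t, 0 ≤ t → x t ≤ b' := fun t ht => not_lt.1 fun hlt =>
    hnot (eventually_atTop.2 ⟨t, fun s hs => hlt.trans_le (hmono t s ht hs)⟩)
  have hsub : Icc (x 0) b' ⊆ Ioo a b := Icc_subset_Ioo hx0 hb'
  obtain ⟨y₀, hy₀, hmin⟩ := isCompact_Icc.exists_isMinOn
    (nonempty_Icc.2 (hle 0 le_rfl)) (hFc.mono hsub)
  have hc : 0 < F y₀ := hFpos _ (hsub hy₀)
  have hgrowth : ∀ t, 0 ≤ t → F y₀ * t ≤ x t - x 0 := fun t ht => by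
    simpa using mul_sub_le_sub_of_hasDerivAt_Ici (C := F y₀) hode
      (fun s hs => hmin ⟨hmono 0 s le_rfl hs, hle s hs⟩) le_rfl ht
  have hT : 0 ≤ (b' - x 0) / F y₀ + 1 :=
    add_nonneg (div_nonneg (sub_nonneg.2 (hle 0 le_rfl)) hc.le) zero_le_one
  have hFT : F y₀ * ((b' - x 0) / F y₀ + 1) = b' - x 0 + F y₀ := by field_simp
  linarith [hgrowth _ hT, hle _ hT]

noncomputable def replicatorField (m n : ℕ) (d R y : ℝ) : ℝ :=
  y * (1 - y) / (m + n * y) * (R - d / (m + n * y))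

section ReplicatorField

variable {m : ℕ} (n : ℕ) {d R y : ℝ}

theorem natCast_add_mul_pos (hm : 0 < m) (hy : 0 ≤ y) : (0 : ℝ) < m + n * y := by
  have : (0 : ℝ) < m := by exact_mod_cast hm
  positivity

theorem div_natCast_add_mul_lt (hm : 0 < m) (hd : 0 ≤ d) (h : d / m < R) (hy : 0 ≤ y) :
    d / (m + n * y) < R := by
  refine lt_of_le_of_lt (div_le_div_of_nonneg_left hd (by exact_mod_cast hm) ?_) h
  exact le_add_of_nonneg_right (by positivity)

theorem replicatorField_nonneg (hm : 0 < m) (hd : 0 ≤ d) (h : d / m < R) (hy : y ∈ Icc 0 1) :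
    0 ≤ replicatorField m n d R y :=
  mul_nonneg
    (div_nonneg (mul_nonneg hy.1 (sub_nonneg.2 hy.2)) (natCast_add_mul_pos n hm hy.1).le)
    (sub_pos.2 (div_natCast_add_mul_lt n hm hd h hy.1)).le

theorem replicatorField_pos (hm : 0 < m) (hd : 0 ≤ d) (h : d / m < R) (hy : y ∈ Ioo 0 1) :
    0 < replicatorField m n d R y :=
  mul_pos (div_pos (mul_pos hy.1 (sub_pos.2 hy.2)) (natCast_add_mul_pos n hm hy.1.le))
    (sub_pos.2 (div_natCast_add_mul_lt n hm hd h hy.1.le))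

theorem continuousOn_replicatorField (hm : 0 < m) (d R : ℝ) :
    ContinuousOn (replicatorField m n d R) (Ici 0) := by
  have hne : ∀ y ∈ Ici (0 : ℝ), (m : ℝ) + n * y ≠ 0 := fun y hy =>
    (natCast_add_mul_pos n hm hy).ne'
  unfold replicatorField
  fun_prop (disch := assumption)

end ReplicatorField

theorem stmt_10_general (m n : ℕ) (hm : 0 < m) (d R : ℝ) (hd : 0 < d)
    (h : d / (m : ℝ) < R)
    (x : ℝ → ℝ)
    (hmem : ∀ t : ℝ, 0 ≤ t → x t ∈ Set.Icc (0 : ℝ) 1)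
    (hode : ∀ t : ℝ, 0 ≤ t →
      HasDerivAt x
        ((x t * (1 - x t) / ((m : ℝ) + n * x t)) * (R - d / ((m : ℝ) + n * x t))) t)
    (h0 : x 0 ∈ Set.Ioc (0 : ℝ) 1) :
    Filter.Tendsto x Filter.atTop (nhds 1) :=
  tendsto_right_endpoint_of_hasDerivAt (F := replicatorField m n d R)
    ((continuousOn_replicatorField n hm d R).mono fun _ hy => hy.1.le)
    (fun _ hy => replicatorField_nonneg n hm hd.le h hy)
    (fun _ hy => replicatorField_pos n hm hd.le h hy) hmem hode h0.1

/-- If R > d/m, every trajectory of ẋ = φ_R(x) on [0,1] starting in (0,1]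
converges to 1. -/
theorem stmt_10 (m n : ℕ) (hm : 0 < m) (hn : 0 < n) (d R : ℝ) (hd : 0 < d) (hR : 0 < R)
    (h : d / (m : ℝ) < R)
    (x : ℝ → ℝ)
    (hmem : ∀ t : ℝ, 0 ≤ t → x t ∈ Set.Icc (0 : ℝ) 1)
    (hode : ∀ t : ℝ, 0 ≤ t →
      HasDerivAt x
        ((x t * (1 - x t) / ((m : ℝ) + n * x t)) * (R - d / ((m : ℝ) + n * x t))) t)
    (h0 : x 0 ∈ Set.Ioc (0 : ℝ) 1) :
    Filter.Tendsto x Filter.atTop (nhds 1) :=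
  stmt_10_general m n hm d R hd h x hmem hode h0
end

section
/- Suppose d/(m+n) < R < d/m and let x* = (1/n)(d/R − m) ∈ (0,1). If x : [0,∞) → [0,1] is differentiable and satisfies x'(t) = φ_R(x(t)) for all t ≥ 0, then: if x(0) ∈ (x*, 1] then x(t) → 1 as t → ∞, and if x(0) ∈ [0, x*) then x(t) → 0 as t → ∞ (the two asymptotically stable equilibria x = 0 and x = 1 coexist, with basins of attraction separated by x*). -/
open Set Filter Topology

/-- Barrier lemma: if the vector field is positive at `c` and the trajectory starts
at or above `c`, it stays at or above `c` for all forward time. -/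
private lemma barrier_up (f x : ℝ → ℝ)
    (hode : ∀ t : ℝ, 0 ≤ t → HasDerivAt x (f (x t)) t)
    (c : ℝ) (hfc : 0 < f c) (h0 : c ≤ x 0) :
    ∀ t : ℝ, 0 ≤ t → c ≤ x t := by
  intro t₁ ht₁
  by_contra hlt
  push_neg at hlt
  set S : Set ℝ := Icc 0 t₁ ∩ x ⁻¹' Ici c with hSdef
  have hxc : ContinuousOn x (Icc 0 t₁) := fun u hu =>
    ((hode u hu.1).continuousAt).continuousWithinAt
  have hSclosed : IsClosed S :=
    hxc.preimage_isClosed_of_isClosed isClosed_Icc isClosed_Ici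
  have hScomp : IsCompact S :=
    isCompact_Icc.of_isClosed_subset hSclosed inter_subset_left
  have hSne : S.Nonempty := ⟨0, ⟨le_refl 0, ht₁⟩, h0⟩
  set s := sSup S with hs
  have hsS : s ∈ S := hScomp.sSup_mem hSne
  have hs0 : 0 ≤ s := hsS.1.1
  have hst₁ : s < t₁ := by
    rcases lt_or_eq_of_le hsS.1.2 with h | h
    · exact h
    · exact absurd (h ▸ hsS.2) (not_le.mpr hlt)
  have hafter : ∀ u ∈ Ioc s t₁, x u < c := by
    intro u hu
    by_contra hge
    push_neg at hge
    have hu' : u ∈ S := ⟨⟨le_trans hs0 hu.1.le, hu.2⟩, hge⟩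
    exact absurd (le_csSup hScomp.bddAbove hu') (not_le.mpr hu.1)
  have hxs : x s = c := by
    refine le_antisymm ?_ hsS.2
    have hxcont : ContinuousWithinAt x (Ioi s) s :=
      ((hode s hs0).continuousAt).continuousWithinAt
    refine le_of_tendsto hxcont ?_
    filter_upwards [Ioc_mem_nhdsGT_of_mem ⟨le_refl s, hst₁⟩] with u hu
    exact (hafter u hu).le
  have hder : HasDerivAt x (f c) s := hxs ▸ hode s hs0
  have hslope : Tendsto (slope x s) (𝓝[>] s) (𝓝 (f c)) :=
    (hasDerivAt_iff_tendsto_slope.mp hder).mono_left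
      (nhdsWithin_mono s fun y hy => ne_of_gt hy)
  have hev : ∀ᶠ u in 𝓝[>] s, 0 < slope x s u :=
    hslope.eventually (eventually_gt_nhds hfc)
  have h2ev : ∀ᶠ u in 𝓝[>] s, u ∈ Ioc s t₁ :=
    Filter.eventually_of_mem (Ioc_mem_nhdsGT_of_mem ⟨le_refl s, hst₁⟩) fun u hu => hu
  obtain ⟨u, hu1, hu2⟩ := (hev.and h2ev).exists
  have husub : 0 < u - s := sub_pos.mpr hu2.1
  rw [slope_def_field] at hu1
  have hxu : 0 < x u - x s := by
    by_contra hle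
    push_neg at hle
    exact absurd hu1 (not_lt.mpr (div_nonpos_of_nonpos_of_nonneg (by linarith) husub.le))
  have h2 := hafter u hu2
  rw [hxs] at hxu
  linarith

private lemma barrier_down (f x : ℝ → ℝ)
    (hode : ∀ t : ℝ, 0 ≤ t → HasDerivAt x (f (x t)) t)
    (c : ℝ) (hfc : f c < 0) (h0 : x 0 ≤ c) :
    ∀ t : ℝ, 0 ≤ t → x t ≤ c := by
  have h := barrier_up (fun y => -f (-y)) (fun t => -x t)
    (fun t ht => by simp only [neg_neg]; exact (hode t ht).neg)
    (-c) (by simpa using hfc) (by simpa using h0)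
  intro t ht
  have := h t ht
  simpa using this

/-- If the trajectory stays in `[a, b]`, the field is positive on `[a, b)` and
nonnegative at `b`, then the trajectory converges to `b`. -/
private lemma tendsto_up (f x : ℝ → ℝ) (a b : ℝ)
    (hode : ∀ t : ℝ, 0 ≤ t → HasDerivAt x (f (x t)) t)
    (hinv : ∀ t : ℝ, 0 ≤ t → x t ∈ Icc a b)
    (hpos : ∀ y ∈ Ico a b, 0 < f y)
    (hfb : 0 ≤ f b)
    (hcont : ∀ y ∈ Ico a b, ContinuousAt f y) :
    Tendsto x atTop (𝓝 b) := by
  have hfnn : ∀ t : ℝ, 0 ≤ t → 0 ≤ f (x t) := by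
    intro t ht
    rcases eq_or_lt_of_le (hinv t ht).2 with h | h
    · rw [h]; exact hfb
    · exact (hpos _ ⟨(hinv t ht).1, h⟩).le
  have hmono : MonotoneOn x (Ici 0) := by
    apply monotoneOn_of_deriv_nonneg (convex_Ici 0)
    · exact fun t ht => ((hode t ht).continuousAt).continuousWithinAt
    · rw [interior_Ici]
      exact fun t ht => ((hode t (le_of_lt ht)).differentiableAt).differentiableWithinAt
    · rw [interior_Ici]
      intro t ht
      rw [(hode t ht.le).deriv]
      exact hfnn t ht.le
  set L := sSup (x '' Ici 0) with hLdef
  have hne : (x '' Ici 0).Nonempty := ⟨x 0, 0, self_mem_Ici, rfl⟩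
  have hbdd : BddAbove (x '' Ici 0) := ⟨b, by rintro _ ⟨t, ht, rfl⟩; exact (hinv t ht).2⟩
  have hxL : ∀ t : ℝ, 0 ≤ t → x t ≤ L := fun t ht => le_csSup hbdd ⟨t, ht, rfl⟩
  have hLb : L ≤ b := csSup_le hne (by rintro _ ⟨t, ht, rfl⟩; exact (hinv t ht).2)
  have hlim : Tendsto x atTop (𝓝 L) := by
    rw [Metric.tendsto_atTop]
    intro ε hε
    obtain ⟨_, ⟨t₀, ht₀, rfl⟩, hgt⟩ := exists_lt_of_lt_csSup hne (by linarith : L - ε < L)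
    refine ⟨max t₀ 0, fun t ht => ?_⟩
    have ht0 : (0:ℝ) ≤ t := le_trans (le_max_right _ _) ht
    have h1 : x t₀ ≤ x t := hmono ht₀ ht0 (le_trans (le_max_left _ _) ht)
    have h2 : x t ≤ L := hxL t ht0
    rw [Real.dist_eq, abs_lt]
    constructor <;> linarith
  rcases eq_or_lt_of_le hLb with h | hLlt
  · exact h ▸ hlim
  exfalso
  have hLa : a ≤ L := le_trans (hinv 0 le_rfl).1 (hxL 0 le_rfl)
  have hfL : 0 < f L := hpos L ⟨hLa, hLlt⟩
  have hcomp : Tendsto (fun t => f (x t)) atTop (𝓝 (f L)) :=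
    ((hcont L ⟨hLa, hLlt⟩).tendsto).comp hlim
  have hev : ∀ᶠ t in atTop, f L / 2 < f (x t) :=
    hcomp.eventually (eventually_gt_nhds (by linarith))
  obtain ⟨T₀, hT₀⟩ := eventually_atTop.mp hev
  set ε := f L / 2 with hεdef
  have hε : 0 < ε := by simp only [hεdef]; linarith
  set T := max T₀ 0 with hTdef
  have hT0 : (0:ℝ) ≤ T := le_max_right _ _
  have hgive : ∀ u : ℝ, T ≤ u → HasDerivAt (fun t => x t - ε * t) (f (x u) - ε) u := by
    intro u hu
    exact (hode u (le_trans hT0 hu)).sub (by simpa using (hasDerivAt_id u).const_mul ε)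
  have hgmono : MonotoneOn (fun t => x t - ε * t) (Ici T) := by
    apply monotoneOn_of_deriv_nonneg (convex_Ici T)
    · exact fun u hu => (hgive u hu).continuousAt.continuousWithinAt
    · rw [interior_Ici]
      exact fun u hu => (hgive u hu.le).differentiableAt.differentiableWithinAt
    · rw [interior_Ici]
      intro u hu
      rw [(hgive u hu.le).deriv]
      have := hT₀ u (le_trans (le_max_left _ _) hu.le)
      linarith
  set t₂ := T + (b - a + 1) / ε with ht₂def
  have htT : T ≤ t₂ := by
    have : 0 < (b - a + 1) / ε := div_pos (by linarith) hε
    simp only [ht₂def]; linarith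
  have hkey : x T - ε * T ≤ x t₂ - ε * t₂ := hgmono self_mem_Ici (mem_Ici.mpr htT) htT
  have hεt : ε * t₂ = ε * T + (b - a + 1) := by
    rw [ht₂def, mul_add, mul_div_cancel₀ _ hε.ne']
  have hxT : a ≤ x T := (hinv T hT0).1
  have hxt₂ : x t₂ ≤ b := (hinv t₂ (le_trans hT0 htT)).2
  linarith

private lemma tendsto_down (f x : ℝ → ℝ) (a b : ℝ)
    (hode : ∀ t : ℝ, 0 ≤ t → HasDerivAt x (f (x t)) t)
    (hinv : ∀ t : ℝ, 0 ≤ t → x t ∈ Icc a b)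
    (hneg : ∀ y ∈ Ioc a b, f y < 0)
    (hfa : f a ≤ 0)
    (hcont : ∀ y ∈ Ioc a b, ContinuousAt f y) :
    Tendsto x atTop (𝓝 a) := by
  have h := tendsto_up (fun y => -f (-y)) (fun t => -x t) (-b) (-a)
    (fun t ht => by simp only [neg_neg]; exact (hode t ht).neg)
    (fun t ht => ⟨neg_le_neg (hinv t ht).2, neg_le_neg (hinv t ht).1⟩)
    (fun y hy => by
      have hy' : -y ∈ Ioc a b := ⟨by linarith [hy.2], by linarith [hy.1]⟩
      simpa using (hneg (-y) hy'))
    (by simpa using hfa)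
    (fun y hy => by
      have hy' : -y ∈ Ioc a b := ⟨by linarith [hy.2], by linarith [hy.1]⟩
      exact ((hcont (-y) hy').comp continuous_neg.continuousAt).neg)
  have h' := h.neg
  simpa using h'

/-- If d/(m+n) < R < d/m, then x* ∈ (0,1); trajectories of ẋ = φ_R(x)
starting in (x*, 1] converge to 1, and those starting in [0, x*) converge to 0. -/
theorem stmt_11 (m n : ℕ) (hm : 0 < m) (hn : 0 < n) (d R : ℝ) (hd : 0 < d) (hR : 0 < R)
    (h1 : d / ((m : ℝ) + n) < R) (h2 : R < d / (m : ℝ))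
    (x : ℝ → ℝ)
    (hmem : ∀ t : ℝ, 0 ≤ t → x t ∈ Set.Icc (0 : ℝ) 1)
    (hode : ∀ t : ℝ, 0 ≤ t →
      HasDerivAt x
        ((x t * (1 - x t) / ((m : ℝ) + n * x t)) * (R - d / ((m : ℝ) + n * x t))) t) :
    (1 / (n : ℝ) * (d / R - m) ∈ Set.Ioo (0 : ℝ) 1) ∧
    (x 0 ∈ Set.Ioc (1 / (n : ℝ) * (d / R - m)) 1 →
      Filter.Tendsto x Filter.atTop (nhds 1)) ∧
    (x 0 ∈ Set.Ico (0 : ℝ) (1 / (n : ℝ) * (d / R - m)) →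
      Filter.Tendsto x Filter.atTop (nhds 0)) := by
  have hm0 : (0:ℝ) < m := by exact_mod_cast hm
  have hn0 : (0:ℝ) < n := by exact_mod_cast hn
  set f : ℝ → ℝ := fun y => y * (1 - y) / ((m : ℝ) + n * y) * (R - d / ((m : ℝ) + n * y))
    with hfdef
  have hode' : ∀ t : ℝ, 0 ≤ t → HasDerivAt x (f (x t)) t := fun t ht => hode t ht
  set xs := 1 / (n : ℝ) * (d / R - m) with hxsdef
  have hmn0 : (0:ℝ) < (m:ℝ) + n := by linarith
  have hq1 : (m:ℝ) < d / R := by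
    rw [lt_div_iff₀ hR]
    have := (lt_div_iff₀ hm0).mp h2
    linarith
  have hq2 : d / R < (m:ℝ) + n := by
    rw [div_lt_iff₀ hR]
    have := (div_lt_iff₀ hmn0).mp h1
    linarith
  have hxs0 : 0 < xs := by
    rw [hxsdef]
    exact mul_pos (by positivity) (by linarith)
  have hxs1 : xs < 1 := by
    rw [hxsdef, one_div, inv_mul_eq_div, div_lt_one hn0]
    linarith
  have hden : ∀ y : ℝ, 0 ≤ y → 0 < (m:ℝ) + n * y := fun y hy =>
    add_pos_of_pos_of_nonneg hm0 (mul_nonneg hn0.le hy)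
  have hsign_pos : ∀ y : ℝ, 0 ≤ y → xs < y → 0 < R - d / ((m:ℝ) + n * y) := by
    intro y hy hxy
    have h' : d / R < (m:ℝ) + n * y := by
      have hmul := mul_lt_mul_of_pos_left hxy hn0
      have heq : (n:ℝ) * (1 / (n:ℝ) * (d / R - m)) = d / R - m := by
        field_simp
      rw [hxsdef, heq] at hmul
      linarith
    have hd' : d < ((m:ℝ) + n * y) * R := (div_lt_iff₀ hR).mp h'
    rw [sub_pos, div_lt_iff₀ (hden y hy)]
    linarith
  have hsign_neg : ∀ y : ℝ, 0 ≤ y → y < xs → R - d / ((m:ℝ) + n * y) < 0 := by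
    intro y hy hxy
    have h' : (m:ℝ) + n * y < d / R := by
      have hmul := mul_lt_mul_of_pos_left hxy hn0
      have heq : (n:ℝ) * (1 / (n:ℝ) * (d / R - m)) = d / R - m := by
        field_simp
      rw [hxsdef, heq] at hmul
      linarith
    have hd' : ((m:ℝ) + n * y) * R < d := (lt_div_iff₀ hR).mp h'
    rw [sub_neg, lt_div_iff₀ (hden y hy)]
    linarith
  have hcont_f : ∀ y : ℝ, 0 ≤ y → ContinuousAt f y := by
    intro y hy
    have hne : ((m:ℝ) + n * y) ≠ 0 := (hden y hy).ne'
    have hD : ContinuousAt (fun y : ℝ => (m:ℝ) + n * y) y := by fun_prop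
    exact ((((continuousAt_id.mul (continuousAt_const.sub continuousAt_id))).div hD hne).mul
      (continuousAt_const.sub (continuousAt_const.div hD hne)))
  have hf1 : f 1 = 0 := by rw [hfdef]; norm_num
  have hf0 : f 0 = 0 := by rw [hfdef]; norm_num
  refine ⟨⟨hxs0, hxs1⟩, ?_, ?_⟩
  · -- starting in (xs, 1]
    intro hx0
    obtain ⟨hx0l, hx0r⟩ := hx0
    set c₀ := (xs + x 0) / 2 with hc₀def
    have hc₀l : xs < c₀ := by rw [hc₀def]; linarith
    have hc₀r : c₀ < x 0 := by rw [hc₀def]; linarith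
    have hc₀1 : c₀ < 1 := lt_of_lt_of_le hc₀r hx0r
    have hc₀pos : 0 < c₀ := lt_trans hxs0 hc₀l
    have hfpos : ∀ y ∈ Ico c₀ 1, 0 < f y := by
      intro y hy
      have hy0 : 0 < y := lt_of_lt_of_le hc₀pos hy.1
      have hy1 : y < 1 := hy.2
      exact mul_pos (div_pos (mul_pos hy0 (by linarith)) (hden y hy0.le))
        (hsign_pos y hy0.le (lt_of_lt_of_le hc₀l hy.1))
    have hfc₀ : 0 < f c₀ := hfpos c₀ ⟨le_refl _, hc₀1⟩
    have hbar := barrier_up f x hode' c₀ hfc₀ hc₀r.le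
    have hinv : ∀ t : ℝ, 0 ≤ t → x t ∈ Icc c₀ 1 := fun t ht =>
      ⟨hbar t ht, (hmem t ht).2⟩
    exact tendsto_up f x c₀ 1 hode' hinv hfpos hf1.ge
      (fun y hy => hcont_f y (le_trans hc₀pos.le hy.1))
  · -- starting in [0, xs)
    intro hx0
    obtain ⟨hx0l, hx0r⟩ := hx0
    set c₁ := (x 0 + xs) / 2 with hc₁def
    have hc₁l : x 0 < c₁ := by rw [hc₁def]; linarith
    have hc₁r : c₁ < xs := by rw [hc₁def]; linarith
    have hc₁pos : 0 < c₁ := lt_of_le_of_lt hx0l hc₁l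
    have hc₁1 : c₁ < 1 := lt_trans hc₁r hxs1
    have hfneg : ∀ y ∈ Ioc 0 c₁, f y < 0 := by
      intro y hy
      have hy0 : 0 < y := hy.1
      have hy1 : y < 1 := lt_of_le_of_lt hy.2 hc₁1
      exact mul_neg_of_pos_of_neg (div_pos (mul_pos hy0 (by linarith)) (hden y hy0.le))
        (hsign_neg y hy0.le (lt_of_le_of_lt hy.2 hc₁r))
    have hfc₁ : f c₁ < 0 := hfneg c₁ ⟨hc₁pos, le_refl _⟩
    have hbar := barrier_down f x hode' c₁ hfc₁ hc₁l.le
    have hinv : ∀ t : ℝ, 0 ≤ t → x t ∈ Icc 0 c₁ := fun t ht =>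
      ⟨(hmem t ht).1, hbar t ht⟩
    exact tendsto_down f x 0 c₁ hode' hinv hfneg hf0.le
      (fun y hy => hcont_f y hy.1.le)
end

section
/- Define f(x, μ) = (x(1−x)/(m+n·x))·(μ + d/m − d/(m+n·x)). Then f(0,0) = 0, ∂f/∂x(0,0) = 0, ∂f/∂μ(0,0) = 0, ∂²f/∂x∂μ(0,0) = 1/m ≠ 0, and ∂²f/∂x²(0,0) = 2dn/m³ ≠ 0; hence the system ẋ = f(x,μ) satisfies the standard (T1)–(T3) conditions for a transcritical bifurcation at (x, μ) = (0, 0), i.e., the replicator dynamics ẋ = φ_R(x) undergoes a transcritical bifurcation at (x₁, R) = (0, d/m). -/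
private lemma hasDerivAt_B (c k x : ℝ) : HasDerivAt (fun x : ℝ => c + k * x) k x := by
  exact ((hasDerivAt_const x c).add ((hasDerivAt_id x).const_mul k)).congr_deriv (by ring)

private lemma hasDerivAt_N (x : ℝ) : HasDerivAt (fun x : ℝ => x * (1 - x)) (1 - 2 * x) x := by
  have h := (hasDerivAt_id x).mul ((hasDerivAt_const x 1).sub (hasDerivAt_id x))
  exact h.congr_deriv (by simp only [Pi.sub_apply, id]; ring)

private lemma hasDerivAt_H (c k d μ x : ℝ) (hB : c + k * x ≠ 0) :
    HasDerivAt (fun x : ℝ => μ + d / c - d / (c + k * x)) (d * k / (c + k * x) ^ 2) x := by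
  have h := (hasDerivAt_const x (μ + d / c)).sub
    ((hasDerivAt_const x d).div (hasDerivAt_B c k x) hB)
  exact h.congr_deriv (by ring)

private lemma hasDerivAt_aux (c k d μ x : ℝ) (hB : c + k * x ≠ 0) :
    HasDerivAt (fun x : ℝ => x * (1 - x) / (c + k * x) * (μ + d / c - d / (c + k * x)))
      (((1 - 2 * x) * (c + k * x) - x * (1 - x) * k) / (c + k * x) ^ 2
          * (μ + d / c - d / (c + k * x))
        + x * (1 - x) / (c + k * x) * (d * k / (c + k * x) ^ 2)) x :=
  ((hasDerivAt_N x).div (hasDerivAt_B c k x) hB).mul (hasDerivAt_H c k d μ x hB)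

/-- Transcritical bifurcation conditions (T1)–(T3) at (x, μ) = (0, 0) for
f(x, μ) = (x(1−x)/(m+nx))(μ + d/m − d/(m+nx)), i.e. at (x₁, R) = (0, d/m). -/
theorem stmt_13 (m n : ℕ) (hm : 0 < m) (hn : 0 < n) (d : ℝ) (hd : 0 < d) :
    let f : ℝ → ℝ → ℝ := fun x μ =>
      (x * (1 - x) / ((m : ℝ) + n * x)) * (μ + d / (m : ℝ) - d / ((m : ℝ) + n * x))
    f 0 0 = 0 ∧
    deriv (fun x : ℝ => f x 0) 0 = 0 ∧
    deriv (fun μ : ℝ => f 0 μ) 0 = 0 ∧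
    deriv (fun μ : ℝ => deriv (fun x : ℝ => f x μ) 0) 0 = 1 / (m : ℝ) ∧
    (1 / (m : ℝ) ≠ 0) ∧
    deriv (deriv (fun x : ℝ => f x 0)) 0 = 2 * d * n / (m : ℝ) ^ 3 ∧
    (2 * d * (n : ℝ) / (m : ℝ) ^ 3 ≠ 0) := by
  intro f
  set c : ℝ := (m : ℝ) with hc_def
  set k : ℝ := (n : ℝ) with hk_def
  have hc : 0 < c := by rw [hc_def]; exact_mod_cast hm
  have hk : 0 < k := by rw [hk_def]; exact_mod_cast hn
  have hc0 : c ≠ 0 := hc.ne'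
  have hB0 : c + k * 0 ≠ 0 := by simpa using hc0
  -- first partial in x at (0, μ) equals μ / c
  have hx0 : ∀ μ : ℝ, deriv (fun x : ℝ => f x μ) 0 = μ / c := by
    intro μ
    rw [(hasDerivAt_aux c k d μ 0 hB0).deriv]
    field_simp
    ring
  refine ⟨by simp [f], ?_, ?_, ?_, one_div_ne_zero hc0, ?_, ?_⟩
  · rw [hx0 0]; simp
  · have : (fun μ : ℝ => f 0 μ) = fun _ => 0 := by funext μ; simp [f]
    rw [this, deriv_const]
  · have : (fun μ : ℝ => deriv (fun x : ℝ => f x μ) 0) = fun μ => μ / c := by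
      funext μ; exact hx0 μ
    rw [this]
    simp [deriv_div_const]
  · -- second derivative in x
    have hev : ∀ᶠ x in nhds (0 : ℝ), c + k * x ≠ 0 := by
      have hcont : ContinuousAt (fun x : ℝ => c + k * x) 0 := by fun_prop
      exact hcont.eventually_ne hB0
    have heq : deriv (fun x : ℝ => f x 0) =ᶠ[nhds (0 : ℝ)]
        (fun x : ℝ => ((1 - 2 * x) * (c + k * x) - x * (1 - x) * k) / (c + k * x) ^ 2
            * (0 + d / c - d / (c + k * x))
          + x * (1 - x) / (c + k * x) * (d * k / (c + k * x) ^ 2)) :=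
      hev.mono fun x hx => (hasDerivAt_aux c k d 0 x hx).deriv
    rw [heq.deriv_eq]
    have hB2 : HasDerivAt (fun x : ℝ => (c + k * x) ^ 2)
        ((2 : ℕ) * (c + k * 0) ^ (2 - 1) * k) 0 := (hasDerivAt_B c k 0).pow 2
    have hB2ne : (c + k * 0) ^ 2 ≠ 0 := pow_ne_zero _ hB0
    have h1 : HasDerivAt (fun x : ℝ => 1 - 2 * x) (0 - 2 * 1) 0 :=
      (hasDerivAt_const 0 1).sub ((hasDerivAt_id 0).const_mul 2)
    have hA : HasDerivAt (fun x : ℝ => (1 - 2 * x) * (c + k * x) - x * (1 - x) * k)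
        ((0 - 2 * 1) * (c + k * 0) + (1 - 2 * 0) * k - (1 - 2 * 0) * k) 0 :=
      (h1.mul (hasDerivAt_B c k 0)).sub ((hasDerivAt_N 0).mul_const k)
    have hterm1 := (hA.div hB2 hB2ne).mul (hasDerivAt_H c k d 0 0 hB0)
    have hterm2 := (((hasDerivAt_N 0).div (hasDerivAt_B c k 0) hB0)).mul
      ((hasDerivAt_const 0 (d * k)).div hB2 hB2ne)
    have htot := hterm1.add hterm2
    refine Eq.trans htot.deriv ?_
    simp only [Pi.div_apply]
    field_simp
    ring
  · positivity
end

section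
/- Define f(x, μ) = −(x(1−x)/(m+n(1−x)))·(μ + d/(m+n) − d/(m+n(1−x))). Then f(0,0) = 0, ∂f/∂x(0,0) = 0, ∂f/∂μ(0,0) = 0, ∂²f/∂x∂μ(0,0) = −1/(m+n) ≠ 0, and ∂²f/∂x²(0,0) = 2dn/(m+n)³ ≠ 0; hence the system ẋ = f(x,μ) satisfies the standard (T1)–(T3) conditions for a transcritical bifurcation at (x, μ) = (0, 0), i.e., the replicator dynamics ẋ₁ = φ_R(x₁) undergoes a transcritical bifurcation at (x₁, R) = (1, d/(m+n)). -/
private lemma hD' (m n : ℕ) (x : ℝ) :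
    HasDerivAt (fun x : ℝ => (m:ℝ) + n * (1 - x)) (-(n:ℝ)) x := by
  simpa using ((((hasDerivAt_id x).const_sub 1).const_mul (n:ℝ)).const_add (m:ℝ))

private lemma aux1 (m n : ℕ) (hm : 0 < m) (hn : 0 < n) (d μ : ℝ) :
    HasDerivAt (fun x : ℝ => -((x * (1 - x) / ((m : ℝ) + n * (1 - x))) *
        (μ + d / ((m : ℝ) + n) - d / ((m : ℝ) + n * (1 - x)))))
      (-(μ / ((m:ℝ) + n))) 0 := by
  have hA : (0:ℝ) < (m:ℝ) + n := by positivity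
  have hx : (m:ℝ) + n * (1 - (0:ℝ)) ≠ 0 := by norm_num; positivity
  have hP : HasDerivAt (fun x : ℝ => x * (1 - x)) (1 * (1 - (0:ℝ)) + 0 * (-1)) 0 := by
    have := (hasDerivAt_id (0:ℝ)).mul ((hasDerivAt_id (0:ℝ)).const_sub 1)
    exact this.congr_deriv (by norm_num)
  have hr := hP.div (hD' m n 0) hx
  have hq := (hasDerivAt_const (0:ℝ) d).div (hD' m n 0) hx
  have hs := hq.const_sub (μ + d / ((m:ℝ) + n))
  have hfull := (hr.mul hs).neg
  refine hfull.congr_deriv ?_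
  simp only [Pi.div_apply]
  field_simp
  ring

private lemma fun_eq (m n : ℕ) (hm : 0 < m) (hn : 0 < n) (d : ℝ) :
    (fun x : ℝ => -((x * (1 - x) / ((m : ℝ) + n * (1 - x))) *
        ((0:ℝ) + d / ((m : ℝ) + n) - d / ((m : ℝ) + n * (1 - x)))))
    = (fun x : ℝ => d * n * (x^2 * (1 - x)) /
        (((m:ℝ) + n) * ((m:ℝ) + n * (1 - x))^2)) := by
  have hA : ((m:ℝ) + n) ≠ 0 := by positivity
  funext x
  by_cases hx : (m:ℝ) + n * (1 - x) = 0
  · simp [hx]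
  · generalize hy : (m:ℝ) + n * (1 - x) = y at hx ⊢
    field_simp
    rw [← hy]
    ring

private lemma aux2 (m n : ℕ) (hm : 0 < m) (hn : 0 < n) (d : ℝ) (x : ℝ)
    (hx : (m:ℝ) + n * (1 - x) ≠ 0) :
    HasDerivAt (fun x : ℝ => d * n * (x^2 * (1 - x)) /
        (((m:ℝ) + n) * ((m:ℝ) + n * (1 - x))^2))
      (d * n * ((2*x - 3*x^2) * ((m:ℝ) + n * (1 - x)) + 2*n*(x^2 - x^3)) /
        (((m:ℝ) + n) * ((m:ℝ) + n * (1 - x))^3)) x := by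
  have hA : ((m:ℝ) + n) ≠ 0 := by positivity
  have hnum : HasDerivAt (fun x : ℝ => d * n * (x^2 * (1 - x)))
      (d * n * ((2 * x ^ 1 * (1 - x)) + x^2 * (-1))) x := by
    have := ((hasDerivAt_pow 2 x).mul ((hasDerivAt_id x).const_sub 1)).const_mul ((d:ℝ) * n)
    simpa using this
  have hden : HasDerivAt (fun x : ℝ => ((m:ℝ) + n) * ((m:ℝ) + n * (1 - x))^2)
      (((m:ℝ) + n) * (2 * ((m:ℝ) + n * (1 - x)) ^ 1 * (-(n:ℝ)))) x := by
    simpa using ((hD' m n x).pow 2).const_mul ((m:ℝ) + (n:ℝ))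
  have hden0 : ((m:ℝ) + n) * ((m:ℝ) + n * (1 - x))^2 ≠ 0 :=
    mul_ne_zero hA (pow_ne_zero 2 hx)
  have := hnum.div hden hden0
  refine this.congr_deriv ?_
  field_simp
  ring

private lemma aux3 (m n : ℕ) (hm : 0 < m) (hn : 0 < n) (d : ℝ) :
    HasDerivAt (fun x : ℝ => d * n * ((2*x - 3*x^2) * ((m:ℝ) + n * (1 - x)) + 2*n*(x^2 - x^3)) /
        (((m:ℝ) + n) * ((m:ℝ) + n * (1 - x))^3))
      (2 * d * n / ((m:ℝ) + n)^3) 0 := by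
  have hA : (0:ℝ) < (m:ℝ) + n := by positivity
  have hx : (m:ℝ) + n * (1 - (0:ℝ)) ≠ 0 := by norm_num; positivity
  have h1 : HasDerivAt (fun x : ℝ => 2*x - 3*x^2) (2 - 3 * (2 * (0:ℝ)^1)) 0 := by
    have := (((hasDerivAt_id (0:ℝ)).const_mul 2)).sub ((hasDerivAt_pow 2 (0:ℝ)).const_mul 3)
    exact this.congr_deriv (by norm_num)
  have h2 : HasDerivAt (fun x : ℝ => 2*(n:ℝ)*(x^2 - x^3))
      (2*(n:ℝ) * (2*(0:ℝ)^1 - 3*(0:ℝ)^2)) 0 := by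
    have := ((hasDerivAt_pow 2 (0:ℝ)).sub (hasDerivAt_pow 3 (0:ℝ))).const_mul (2*(n:ℝ))
    simpa using this
  have hnum : HasDerivAt
      (fun x : ℝ => d * n * ((2*x - 3*x^2) * ((m:ℝ) + n * (1 - x)) + 2*(n:ℝ)*(x^2 - x^3)))
      (d * n * (((2 - 3 * (2 * (0:ℝ)^1)) * ((m:ℝ) + n * (1 - (0:ℝ)))
        + (2*(0:ℝ) - 3*(0:ℝ)^2) * (-(n:ℝ))) + 2*(n:ℝ) * (2*(0:ℝ)^1 - 3*(0:ℝ)^2))) 0 :=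
    ((h1.mul (hD' m n 0)).add h2).const_mul ((d:ℝ) * n)
  have hden : HasDerivAt (fun x : ℝ => ((m:ℝ) + n) * ((m:ℝ) + n * (1 - x))^3)
      (((m:ℝ) + n) * (3 * ((m:ℝ) + n * (1 - (0:ℝ))) ^ 2 * (-(n:ℝ)))) 0 := by
    simpa using ((hD' m n 0).pow 3).const_mul ((m:ℝ) + (n:ℝ))
  have hden0 : ((m:ℝ) + n) * ((m:ℝ) + n * (1 - (0:ℝ)))^3 ≠ 0 :=
    mul_ne_zero hA.ne' (pow_ne_zero 3 hx)
  have := hnum.div hden hden0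
  refine this.congr_deriv ?_
  field_simp
  ring

/-- Transcritical bifurcation conditions (T1)–(T3) at (x, μ) = (0, 0) for
f(x, μ) = −(x(1−x)/(m+n(1−x)))(μ + d/(m+n) − d/(m+n(1−x))), i.e. at (x₁, R) = (1, d/(m+n)). -/
theorem stmt_14 (m n : ℕ) (hm : 0 < m) (hn : 0 < n) (d : ℝ) (hd : 0 < d) :
    let f : ℝ → ℝ → ℝ := fun x μ =>
      -((x * (1 - x) / ((m : ℝ) + n * (1 - x))) *
        (μ + d / ((m : ℝ) + n) - d / ((m : ℝ) + n * (1 - x))))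
    f 0 0 = 0 ∧
    deriv (fun x : ℝ => f x 0) 0 = 0 ∧
    deriv (fun μ : ℝ => f 0 μ) 0 = 0 ∧
    deriv (fun μ : ℝ => deriv (fun x : ℝ => f x μ) 0) 0 = -(1 / ((m : ℝ) + n)) ∧
    (-(1 / ((m : ℝ) + n)) ≠ 0) ∧
    deriv (deriv (fun x : ℝ => f x 0)) 0 = 2 * d * n / ((m : ℝ) + n) ^ 3 ∧
    (2 * d * (n : ℝ) / ((m : ℝ) + n) ^ 3 ≠ 0) := by
  intro f
  have hA : (0:ℝ) < (m:ℝ) + n := by positivity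
  have hnR : (0:ℝ) < (n:ℝ) := by exact_mod_cast hn
  refine ⟨?_, ?_, ?_, ?_, ?_, ?_, ?_⟩
  · show -(((0:ℝ) * (1 - 0) / ((m : ℝ) + n * (1 - 0))) *
        ((0:ℝ) + d / ((m : ℝ) + n) - d / ((m : ℝ) + n * (1 - 0)))) = 0
    simp
  · show deriv (fun x : ℝ => -((x * (1 - x) / ((m : ℝ) + n * (1 - x))) *
        ((0:ℝ) + d / ((m : ℝ) + n) - d / ((m : ℝ) + n * (1 - x))))) 0 = 0
    rw [(aux1 m n hm hn d 0).deriv]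
    simp
  · show deriv (fun μ : ℝ => -(((0:ℝ) * (1 - 0) / ((m : ℝ) + n * (1 - 0))) *
        (μ + d / ((m : ℝ) + n) - d / ((m : ℝ) + n * (1 - 0))))) 0 = 0
    simp
  · have heq : (fun μ : ℝ => deriv (fun x : ℝ => f x μ) 0)
        = fun μ : ℝ => -(μ / ((m:ℝ) + n)) := by
      funext μ
      exact (aux1 m n hm hn d μ).deriv
    show deriv (fun μ : ℝ => deriv (fun x : ℝ => f x μ) 0) 0 = -(1 / ((m : ℝ) + n))
    rw [heq]
    have : HasDerivAt (fun μ : ℝ => -(μ / ((m:ℝ) + n))) (-(1 / ((m:ℝ) + n))) 0 := by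
      exact ((hasDerivAt_id (0:ℝ)).div_const ((m:ℝ) + n)).neg.congr_deriv (by simp)
    exact this.deriv
  · have : (0:ℝ) < 1 / ((m:ℝ) + n) := by positivity
    simpa using this.ne'
  · show deriv (deriv (fun x : ℝ => -((x * (1 - x) / ((m : ℝ) + n * (1 - x))) *
        ((0:ℝ) + d / ((m : ℝ) + n) - d / ((m : ℝ) + n * (1 - x)))))) 0
      = 2 * d * n / ((m : ℝ) + n) ^ 3
    rw [fun_eq m n hm hn d]
    have hcont : Continuous (fun x : ℝ => (m:ℝ) + n * (1 - x)) := by continuity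
    have hopen : IsOpen {x : ℝ | (m:ℝ) + n * (1 - x) ≠ 0} :=
      isOpen_compl_singleton.preimage hcont
    have h0mem : (0:ℝ) ∈ {x : ℝ | (m:ℝ) + n * (1 - x) ≠ 0} := by
      show (m:ℝ) + n * (1 - 0) ≠ 0
      norm_num; positivity
    have hev : deriv (fun x : ℝ => d * n * (x^2 * (1 - x)) /
          (((m:ℝ) + n) * ((m:ℝ) + n * (1 - x))^2))
        =ᶠ[nhds 0] (fun x : ℝ =>
          d * n * ((2*x - 3*x^2) * ((m:ℝ) + n * (1 - x)) + 2*n*(x^2 - x^3)) /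
          (((m:ℝ) + n) * ((m:ℝ) + n * (1 - x))^3)) :=
      Filter.eventually_of_mem (hopen.mem_nhds h0mem)
        (fun x hx => (aux2 m n hm hn d x hx).deriv)
    rw [hev.deriv_eq]
    exact (aux3 m n hm hn d).deriv
  · have : (0:ℝ) < 2 * d * (n:ℝ) / ((m:ℝ) + n) ^ 3 := by positivity
    exact this.ne'
end

section
/- Let R₁ : ℝ → ℝ be differentiable at 1 with R₁(1) = R* where R* < d/(m+n), and define the controlled vector field ψ(x) = (x(1−x)/(m+n·x))·(R₁(x) − d/(m+n·x)). Then ψ is differentiable at x = 1 and ψ'(1) = −(1/(m+n))·(R* − d/(m+n)) > 0; in particular the equilibrium x = 1 of ẋ = ψ(x) remains unstable, so x = 1 cannot be stabilized by any such state feedback reward controller when R* < d/(m+n). -/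
/-! At the equilibrium `x = 1` the prefactor `x (1 - x) / (m + n x)` vanishes, so in the product
rule only the derivative of the prefactor survives: `ψ'(1) = -(1 / (m + n)) · (R₁(1) - d / (m + n))`,
whatever the derivative of the reward `R₁` is. The sign then comes from `R* < d / (m + n)`. -/

theorem HasDerivAt.mul_of_eq_zero {𝕜 : Type*} [NontriviallyNormedField 𝕜] {f g : 𝕜 → 𝕜}
    {f' a : 𝕜} (hf : HasDerivAt f f' a) (hfa : f a = 0) (hg : DifferentiableAt 𝕜 g a) :
    HasDerivAt (fun x => f x * g x) (f' * g a) a := by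
  simpa [hfa] using hf.fun_mul hg.hasDerivAt

theorem hasDerivAt_mul_one_sub_div_affine_one {c k : ℝ} (hck : c + k ≠ 0) :
    HasDerivAt (fun x : ℝ => x * (1 - x) / (c + k * x)) (-(1 / (c + k))) 1 := by
  have hnum : HasDerivAt (fun x : ℝ => x * (1 - x)) (1 * (1 - 1) + 1 * (-1)) 1 :=
    (hasDerivAt_id 1).mul ((hasDerivAt_id 1).const_sub 1)
  have hden : HasDerivAt (fun x : ℝ => c + k * x) (k * 1) 1 :=
    ((hasDerivAt_id 1).const_mul k).const_add c
  refine (hnum.div hden (by simpa using hck)).congr_deriv ?_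
  field_simp
  ring

theorem stmt_15_general (m n : ℕ) (hm : 0 < m) (d Rstar : ℝ)
    (R₁ : ℝ → ℝ) (hdiff : DifferentiableAt ℝ R₁ 1) (hR1 : R₁ 1 = Rstar)
    (hRs : Rstar < d / ((m : ℝ) + n)) :
    HasDerivAt
      (fun x : ℝ => (x * (1 - x) / ((m : ℝ) + n * x)) * (R₁ x - d / ((m : ℝ) + n * x)))
      (-(1 / ((m : ℝ) + n)) * (Rstar - d / ((m : ℝ) + n))) 1 ∧
    0 < -(1 / ((m : ℝ) + n)) * (Rstar - d / ((m : ℝ) + n)) := by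
  have hmn : (0 : ℝ) < m + n := by positivity
  have hden : (m : ℝ) + n * 1 ≠ 0 := by simpa using hmn.ne'
  have hreward : DifferentiableAt ℝ (fun x : ℝ => R₁ x - d / ((m : ℝ) + n * x)) 1 :=
    hdiff.sub (by fun_prop (disch := exact hden))
  constructor
  · simpa [hR1] using
      (hasDerivAt_mul_one_sub_div_affine_one hmn.ne').mul_of_eq_zero (by simp) hreward
  · exact mul_pos_of_neg_of_neg (neg_neg_of_pos (by positivity)) (sub_neg.mpr hRs)

/-- With any state feedback reward R₁ differentiable at 1 with
R₁(1) = R* < d/(m+n), the controlled vector field ψ has ψ'(1) = −(1/(m+n))(R* − d/(m+n)) > 0,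
so the equilibrium x = 1 remains unstable. -/
theorem stmt_15 (m n : ℕ) (hm : 0 < m) (hn : 0 < n) (d Rstar : ℝ) (hd : 0 < d)
    (R₁ : ℝ → ℝ) (hdiff : DifferentiableAt ℝ R₁ 1) (hR1 : R₁ 1 = Rstar)
    (hRs : Rstar < d / ((m : ℝ) + n)) :
    HasDerivAt
      (fun x : ℝ => (x * (1 - x) / ((m : ℝ) + n * x)) * (R₁ x - d / ((m : ℝ) + n * x)))
      (-(1 / ((m : ℝ) + n)) * (Rstar - d / ((m : ℝ) + n))) 1 ∧
    0 < -(1 / ((m : ℝ) + n)) * (Rstar - d / ((m : ℝ) + n)) :=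
  stmt_15_general m n hm d Rstar R₁ hdiff hR1 hRs
end

section
/- Assume d/(m+n) < R* < d/m, x* < x̄ ≤ 1, and K > (d − R*·m)/(m·x̄) (note (d − R*·m)/(m·x̄) > 0). Then ζ(0) > 0 and ζ(x*) = K(x̄ − x*)(m + n·x*) > 0, and the quadratic equation ζ(x) = 0 has two distinct real roots α < β satisfying α < 0 and β > x*. -/
lemma quad_root_sub (A B C s : ℝ) (hA : A ≠ 0) (hs : s^2 = B^2 + 4*A*C) :
    -A*((B - s)/(2*A))^2 + B*((B - s)/(2*A)) + C = 0 := by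
  field_simp
  linear_combination (-1) * hs

lemma quad_root_add (A B C s : ℝ) (hA : A ≠ 0) (hs : s^2 = B^2 + 4*A*C) :
    -A*((B + s)/(2*A))^2 + B*((B + s)/(2*A)) + C = 0 := by
  field_simp
  linear_combination (-1) * hs

lemma quad_prod (A B C s : ℝ) (hA : A ≠ 0) (hs : s^2 = B^2 + 4*A*C) :
    A * ((B - s)/(2*A) * ((B + s)/(2*A))) = -C := by
  field_simp
  linear_combination (-1) * hs

lemma quad_sum (A B C s : ℝ) (hA : A ≠ 0) :
    A * ((B - s)/(2*A) + (B + s)/(2*A)) = B := by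
  field_simp
  ring

/-- Under d/(m+n) < R* < d/m, x* < x̄ ≤ 1, and K > (d − R*m)/(m x̄) > 0,
we have ζ(0) > 0, ζ(x*) = K(x̄ − x*)(m + n x*) > 0, and ζ has two distinct real roots
α < β with α < 0 and β > x*. -/
theorem stmt_16 (m n : ℕ) (hm : 0 < m) (hn : 0 < n) (d Rstar K xbar : ℝ)
    (hd : 0 < d) (hRs : 0 < Rstar) (hK : 0 < K)
    (h1 : d / ((m : ℝ) + n) < Rstar) (h2 : Rstar < d / (m : ℝ))
    (hxbar : 1 / (n : ℝ) * (d / Rstar - m) < xbar) (hxbar1 : xbar ≤ 1)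
    (hKgain : (d - Rstar * m) / ((m : ℝ) * xbar) < K) :
    let xstar : ℝ := 1 / (n : ℝ) * (d / Rstar - m)
    let ζ : ℝ → ℝ := fun x =>
      -K * n * x ^ 2 + (K * n * xbar - K * m + Rstar * n) * x + (Rstar * m + K * m * xbar - d)
    0 < (d - Rstar * (m : ℝ)) / ((m : ℝ) * xbar) ∧
    0 < ζ 0 ∧
    ζ xstar = K * (xbar - xstar) * ((m : ℝ) + n * xstar) ∧
    0 < ζ xstar ∧
    ∃ α β : ℝ, α < β ∧ ζ α = 0 ∧ ζ β = 0 ∧ α < 0 ∧ xstar < β := by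
  intro xstar ζ
  have hm' : (0:ℝ) < m := by exact_mod_cast hm
  have hn' : (0:ℝ) < n := by exact_mod_cast hn
  have hRs' : Rstar ≠ 0 := ne_of_gt hRs
  have hdm : Rstar * m < d := by
    have := (lt_div_iff₀ hm').mp h2; linarith
  have hxs : 0 < xstar := by
    have hmd : (m:ℝ) < d / Rstar := by rw [lt_div_iff₀ hRs]; linarith
    have h0 : 0 < d / Rstar - m := by linarith
    exact mul_pos (by positivity) h0
  have hxbar0 : 0 < xbar := lt_trans hxs hxbar
  have hfrac : 0 < (d - Rstar * (m : ℝ)) / ((m : ℝ) * xbar) :=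
    div_pos (by linarith) (mul_pos hm' hxbar0)
  have hC : 0 < Rstar * m + K * m * xbar - d := by
    have := (div_lt_iff₀ (mul_pos hm' hxbar0)).mp hKgain
    nlinarith
  set A : ℝ := K * n with hAdef
  set B : ℝ := K * n * xbar - K * m + Rstar * n with hBdef
  set C : ℝ := Rstar * m + K * m * xbar - d with hCdef
  have hA : 0 < A := mul_pos hK hn'
  have hζeq : ∀ x, ζ x = -A * x ^ 2 + B * x + C := by
    intro x; simp only [ζ, hAdef, hBdef, hCdef]; ring
  have hζ0 : 0 < ζ 0 := by rw [hζeq]; simpa using hC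
  -- value at xstar
  have hnxs : Rstar * ((n:ℝ) * xstar) = d - Rstar * m := by
    show Rstar * ((n:ℝ) * (1 / (n : ℝ) * (d / Rstar - m))) = d - Rstar * m
    field_simp
  have hζxs_eq : ζ xstar = K * (xbar - xstar) * ((m : ℝ) + n * xstar) := by
    rw [hζeq]
    simp only [hAdef, hBdef, hCdef]
    linear_combination hnxs
  have hζxs_pos : 0 < ζ xstar := by
    rw [hζxs_eq]
    have h1' : 0 < xbar - xstar := by
      have : xstar < xbar := hxbar
      linarith
    have h2' : 0 < (m : ℝ) + n * xstar := by positivity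
    positivity
  -- roots
  have hD : 0 < B ^ 2 + 4 * A * C := by nlinarith [sq_nonneg B]
  set s : ℝ := Real.sqrt (B ^ 2 + 4 * A * C) with hsdef
  have hs2 : s ^ 2 = B ^ 2 + 4 * A * C := Real.sq_sqrt hD.le
  have hspos : 0 < s := Real.sqrt_pos.mpr hD
  set α : ℝ := (B - s) / (2 * A) with hαdef
  set β : ℝ := (B + s) / (2 * A) with hβdef
  have hA2 : (0:ℝ) < 2 * A := by positivity
  have hζα : ζ α = 0 := by
    rw [hζeq, hαdef]
    exact quad_root_sub A B C s hA.ne' hs2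
  have hζβ : ζ β = 0 := by
    rw [hζeq, hβdef]
    exact quad_root_add A B C s hA.ne' hs2
  have hαβ : α < β := by
    rw [hαdef, hβdef]
    exact div_lt_div_of_pos_right (by linarith) hA2
  have hα0 : α < 0 := by
    rw [hαdef]
    apply div_neg_of_neg_of_pos _ hA2
    have hsq : B ^ 2 < s ^ 2 := by linarith [hs2, mul_pos hA hC]
    have : B < s := lt_of_pow_lt_pow_left₀ 2 hspos.le hsq
    linarith
  have hsum : A * (α + β) = B := by
    rw [hαdef, hβdef]; exact quad_sum A B C s hA.ne'
  have hprod : A * (α * β) = -C := by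
    rw [hαdef, hβdef]
    exact quad_prod A B C s hA.ne' hs2
  have hkey : A * (xstar - α) * (xstar - β) = A * xstar ^ 2 - B * xstar - C := by
    linear_combination (-xstar) * hsum + hprod
  have hxsβ : xstar < β := by
    by_contra h
    push_neg at h
    have hp : 0 ≤ A * (xstar - α) * (xstar - β) := by
      have : 0 < xstar - α := by linarith
      have h2' : 0 ≤ xstar - β := by linarith
      positivity
    have := hζxs_pos
    rw [hζeq] at this
    linarith [hkey, hp, this]
  exact ⟨hfrac, hζ0, hζxs_eq, hζxs_pos, α, β, hαβ, hζα, hζβ, hα0, hxsβ⟩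
end

section
/- Assume d/(m+n) < R* < d/m, x* < x̄ ≤ 1, K > (d − R*·m)/(m·x̄), and 0 < ε < β − x* if β < 1 while 0 < ε ≤ 1 − x* if β ≥ 1, where β is the larger real root of ζ(x) = 0. Then the controlled vector field g satisfies g(x) > 0 for every x ∈ (0, 1). -/
set_option maxHeartbeats 1000000


/-- Under the gain condition and the ε condition (relative to the larger
root β of ζ), the controlled vector field g is strictly positive on (0,1). -/
theorem stmt_18 (m n : ℕ) (hm : 0 < m) (hn : 0 < n) (d Rstar K xbar ε β : ℝ)
    (hd : 0 < d) (hRs : 0 < Rstar) (hK : 0 < K)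
    (h1 : d / ((m : ℝ) + n) < Rstar) (h2 : Rstar < d / (m : ℝ))
    (hxbar : 1 / (n : ℝ) * (d / Rstar - m) < xbar) (hxbar1 : xbar ≤ 1)
    (hKgain : (d - Rstar * m) / ((m : ℝ) * xbar) < K)
    (hβroot : -K * n * β ^ 2 + (K * n * xbar - K * m + Rstar * n) * β
        + (Rstar * m + K * m * xbar - d) = 0)
    (hβmax : ∀ y : ℝ, -K * n * y ^ 2 + (K * n * xbar - K * m + Rstar * n) * y
        + (Rstar * m + K * m * xbar - d) = 0 → y ≤ β)
    (hε : 0 < ε)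
    (hε1 : β < 1 → ε < β - 1 / (n : ℝ) * (d / Rstar - m))
    (hε2 : 1 ≤ β → ε ≤ 1 - 1 / (n : ℝ) * (d / Rstar - m)) :
    ∀ x ∈ Set.Ioo (0 : ℝ) 1,
      0 < (x * (1 - x) / ((m : ℝ) + n * x)) *
        (Rstar + (if x < 1 / (n : ℝ) * (d / Rstar - m) + ε then K * (xbar - x) else 0)
          - d / ((m : ℝ) + n * x)) := by
  intro x hx
  obtain ⟨hx0, hx1⟩ := hx
  have hmR : (0:ℝ) < m := by exact_mod_cast hm
  have hnR : (0:ℝ) < n := by exact_mod_cast hn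
  have hne : (n:ℝ) ≠ 0 := ne_of_gt hnR
  set xs : ℝ := 1 / (n : ℝ) * (d / Rstar - m) with hxs
  have hxsn : xs * n = d / Rstar - m := by rw [hxs]; field_simp
  have hdm : Rstar * m < d := by
    have := (lt_div_iff₀ hmR).mp h2
    linarith
  have hdmn : d < Rstar * (m + n) := by
    have := (div_lt_iff₀ (by positivity : (0:ℝ) < (m:ℝ) + n)).mp h1
    linarith
  have hxs0 : 0 < xs := by
    have h3 : (m:ℝ) < d / Rstar := by rw [lt_div_iff₀ hRs]; linarith
    rw [hxs]
    have : (0:ℝ) < 1 / (n:ℝ) := by positivity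
    nlinarith
  have hxs1 : xs < 1 := by
    have hlt : d / Rstar < (m:ℝ) + n := by rw [div_lt_iff₀ hRs]; nlinarith
    nlinarith [hxsn]
  have hxbar0 : 0 < xbar := lt_trans hxs0 hxbar
  have hden : (0:ℝ) < (m:ℝ) + n * x := by positivity
  -- c > 0
  have hc : 0 < Rstar * m + K * m * xbar - d := by
    have := (div_lt_iff₀ (by positivity : (0:ℝ) < (m:ℝ) * xbar)).mp hKgain
    nlinarith
  have hfirst : 0 < x * (1 - x) / ((m:ℝ) + n * x) :=
    div_pos (mul_pos hx0 (by linarith)) hden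
  rcases lt_or_ge x (xs + ε) with hcase | hcase
  · rw [if_pos hcase]
    -- x < β
    have hxβ : x < β := by
      rcases lt_or_ge β 1 with hβ1 | hβ1
      · have := hε1 hβ1; linarith
      · linarith
    -- ζ(x) > 0
    have hζ : 0 < -K * n * x ^ 2 + (K * n * xbar - K * m + Rstar * n) * x
        + (Rstar * m + K * m * xbar - d) := by
      have hid : β * (-K * n * x ^ 2 + (K * n * xbar - K * m + Rstar * n) * x
          + (Rstar * m + K * m * xbar - d))
          = (β - x) * ((K * n) * β * x + (Rstar * m + K * m * xbar - d))
            + x * (-K * n * β ^ 2 + (K * n * xbar - K * m + Rstar * n) * β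
              + (Rstar * m + K * m * xbar - d)) := by ring
      rw [hβroot, mul_zero, add_zero] at hid
      have hβpos : 0 < β := lt_trans hx0 hxβ
      have hprod : 0 < (β - x) * ((K * n) * β * x + (Rstar * m + K * m * xbar - d)) := by
        apply mul_pos (by linarith)
        have : 0 < K * n * β * x := by positivity
        linarith
      nlinarith [hid, hprod, hβpos, mul_pos hβpos hprod]
    have hsecond : 0 < Rstar + K * (xbar - x) - d / ((m:ℝ) + n * x) := by
      have heq : Rstar + K * (xbar - x) - d / ((m:ℝ) + n * x)
          = (-K * n * x ^ 2 + (K * n * xbar - K * m + Rstar * n) * x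
            + (Rstar * m + K * m * xbar - d)) / ((m:ℝ) + n * x) := by
        field_simp
        ring
      rw [heq]
      exact div_pos hζ hden
    exact mul_pos hfirst hsecond
  · rw [if_neg (not_lt.mpr hcase)]
    have hxgt : xs < x := by linarith
    have h' : d / Rstar < (m:ℝ) + n * x := by nlinarith [hxsn, hxgt, hnR]
    have hd' : d < Rstar * ((m:ℝ) + n * x) := by
      rw [div_lt_iff₀ hRs] at h'; linarith
    have hsecond : 0 < Rstar + 0 - d / ((m:ℝ) + n * x) := by
      have : d / ((m:ℝ) + n * x) < Rstar := by rw [div_lt_iff₀ hden]; linarith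
      linarith
    exact mul_pos hfirst hsecond
end

section
/- (Proposition 1) Assume d/(m+n) < R* < d/m, x* < x̄ ≤ 1, K > (d − R*·m)/(m·x̄), and 0 < ε < β − x* if β < 1 while 0 < ε ≤ 1 − x* if β ≥ 1, where β is the larger real root of ζ(x) = 0. If x : [0,∞) → [0,1] is differentiable and satisfies x'(t) = g(x(t)) for all t ≥ 0 with x(0) ∈ (0,1], then x(t) → 1 as t → ∞; that is, every trajectory of the controlled replicator dynamics starting in (0,1] converges to 1. -/
/-!
Write `g(s) = s (1 - s) / (m + n s) · φ(s)` with `φ(s) = R* + ΔR(s) - d / (m + n s)`.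
Below the switching point, `φ(s) = ζ(s) / (m + n s)`; the gain condition gives `ζ(0) > 0`, so
the roots of `ζ` have opposite signs and `ζ > 0` on `[0, β)`, and the choice of `ε` keeps this
branch below `β` whenever `β < 1`. Above it, `m + n x* = d / R*` gives
`φ(s) = R* n (s - x*) / (m + n s) ≥ R* n ε / (m + n)`.
Hence `g ≥ 0` on `[0, 1]`, and `g` is bounded below by a positive constant on every `[x(0), L]`
with `L < 1`: the trajectory is nondecreasing and, by the mean value theorem, passes every level
below `1` in finite time.
-/

open Set Filter Topology

theorem quadratic_eq_mul_sub_mul_sub {a b c β : ℝ} (ha : a ≠ 0)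
    (hβ : a * β ^ 2 + b * β + c = 0) (y : ℝ) :
    a * y ^ 2 + b * y + c = a * (y - β) * (y - (-b / a - β)) := by
  have hb : a * (b / a) = b := mul_div_cancel₀ b ha
  linear_combination hβ - (y - β) * hb

theorem exists_pos_le_quadratic {a b c β M : ℝ} (ha : a < 0) (hc : 0 < c)
    (hβ : a * β ^ 2 + b * β + c = 0) (hβmax : ∀ y, a * y ^ 2 + b * y + c = 0 → y ≤ β)
    (hM : M < β) :
    ∃ δ > 0, ∀ y ∈ Icc 0 M, δ ≤ a * y ^ 2 + b * y + c := by
  set γ := -b / a - β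
  have hfac := quadratic_eq_mul_sub_mul_sub ha.ne hβ
  have hγβ : γ ≤ β := hβmax γ (by rw [hfac]; ring)
  -- Vieta: `c = a β γ > 0` with `a < 0`, so the roots have opposite signs.
  have hβγ : β * γ < 0 := by
    have h0 := hfac 0
    nlinarith
  have hγ : γ < 0 := by nlinarith
  refine ⟨-a * (β - M) * -γ, mul_pos (mul_pos (by linarith) (by linarith)) (by linarith),
    fun y hy => ?_⟩
  rw [hfac]
  have : (β - M) * -γ ≤ (β - y) * (y - γ) := by
    apply mul_le_mul <;> linarith [hy.1, hy.2]
  nlinarith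

theorem tendsto_of_hasDerivAt_of_pos {f x : ℝ → ℝ} {a b : ℝ}
    (hmem : ∀ t, 0 ≤ t → x t ∈ Icc a b)
    (hode : ∀ t, 0 ≤ t → HasDerivAt x (f (x t)) t)
    (hnonneg : ∀ s ∈ Icc a b, 0 ≤ f s)
    (hpos : ∀ L < b, ∃ c > 0, ∀ s ∈ Icc (x 0) L, c ≤ f s) :
    Tendsto x atTop (𝓝 b) := by
  have hmono : MonotoneOn x (Ici 0) := by
    refine monotoneOn_of_hasDerivWithinAt_nonneg (f' := fun t => f (x t)) (convex_Ici 0)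
      (fun t ht => (hode t ht).continuousAt.continuousWithinAt) (fun t ht => ?_) fun t ht => ?_
    all_goals rw [interior_Ici] at ht
    · exact (hode t (le_of_lt ht)).hasDerivWithinAt
    · exact hnonneg _ (hmem t (le_of_lt ht))
  -- Below any level `L < b` the speed is at least some `c > 0`, so `L` is passed by time
  -- `(L - x 0) / c + 1`.
  have hpass : ∀ L < b, ∃ T ≥ 0, L < x T := by
    intro L hL
    by_cases h0L : L < x 0
    · exact ⟨0, le_rfl, h0L⟩
    obtain ⟨c, hc, hcf⟩ := hpos L hL
    set T := (L - x 0) / c + 1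
    have hT : 0 < T := by have := div_nonneg (sub_nonneg.2 (not_lt.1 h0L)) hc.le; linarith
    refine ⟨T, hT.le, not_le.1 fun hTL => ?_⟩
    obtain ⟨ξ, hξ, hslope⟩ := exists_hasDerivAt_eq_slope x (fun t => f (x t)) hT
      (fun t ht => (hode t ht.1).continuousAt.continuousWithinAt)
      fun t ht => hode t (le_of_lt ht.1)
    have hξL : x ξ ∈ Icc (x 0) L :=
      ⟨hmono (mem_Ici.2 le_rfl) hξ.1.le hξ.1.le, (hmono hξ.1.le hT.le hξ.2.le).trans hTL⟩
    have : c * T ≤ x T - x 0 := by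
      rw [sub_zero] at hslope
      rw [← le_div_iff₀ hT, ← hslope]
      exact hcf _ hξL
    have : c * T = L - x 0 + c := by
      rw [mul_add, mul_div_cancel₀ _ hc.ne', mul_one]
    linarith
  refine tendsto_order.2 ⟨fun L hL => ?_, fun u hu => ?_⟩
  · obtain ⟨T, hT, hLT⟩ := hpass L hL
    filter_upwards [eventually_ge_atTop T] with t ht
    exact hLT.trans_le (hmono hT (hT.trans ht) ht)
  · filter_upwards [eventually_ge_atTop 0] with t ht
    exact (hmem t ht).2.trans_lt hu

namespace ControlledReplicator

noncomputable def xStar (m n : ℕ) (d Rstar : ℝ) : ℝ := 1 / (n : ℝ) * (d / Rstar - m)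

def zeta (m n : ℕ) (d Rstar K xbar y : ℝ) : ℝ :=
  -K * n * y ^ 2 + (K * n * xbar - K * m + Rstar * n) * y + (Rstar * m + K * m * xbar - d)

noncomputable def growthRate (m n : ℕ) (d Rstar K xbar ε s : ℝ) : ℝ :=
  Rstar + (if s < xStar m n d Rstar + ε then K * (xbar - s) else 0) - d / ((m : ℝ) + n * s)

noncomputable def vectorField (m n : ℕ) (d Rstar K xbar ε s : ℝ) : ℝ :=
  s * (1 - s) / ((m : ℝ) + n * s) * growthRate m n d Rstar K xbar ε s

variable {m n : ℕ} {d Rstar K xbar ε β L s : ℝ}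

theorem xStar_pos (hm : 0 < m) (hn : 0 < n) (hRs : 0 < Rstar) (hRd : Rstar < d / m) :
    0 < xStar m n d Rstar := by
  have hP : (0 : ℝ) < m := by exact_mod_cast hm
  have : (m : ℝ) < d / Rstar := by
    rw [lt_div_iff₀ hRs]
    rw [lt_div_iff₀ hP] at hRd
    linarith
  have : 0 < d / Rstar - m := by linarith
  unfold xStar
  positivity

theorem growthRate_of_lt (hD : (m : ℝ) + n * s ≠ 0) (hs : s < xStar m n d Rstar + ε) :
    growthRate m n d Rstar K xbar ε s = zeta m n d Rstar K xbar s / ((m : ℝ) + n * s) := by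
  rw [growthRate, if_pos hs, eq_div_iff hD, sub_mul, div_mul_cancel₀ _ hD, zeta]
  ring

theorem growthRate_of_le (hn : 0 < n) (hRs : Rstar ≠ 0) (hD : (m : ℝ) + n * s ≠ 0)
    (hs : xStar m n d Rstar + ε ≤ s) :
    growthRate m n d Rstar K xbar ε s =
      Rstar * n * (s - xStar m n d Rstar) / ((m : ℝ) + n * s) := by
  rw [growthRate, if_neg (not_lt.2 hs), eq_div_iff hD, sub_mul, div_mul_cancel₀ _ hD, xStar]
  field_simp
  ring

theorem min_xStar_add_lt (hε1 : β < 1 → ε < β - xStar m n d Rstar) (hL : L < 1) :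
    min L (xStar m n d Rstar + ε) < β := by
  by_cases hβ : β < 1
  · have := hε1 hβ
    linarith [min_le_right L (xStar m n d Rstar + ε)]
  · linarith [min_le_left L (xStar m n d Rstar + ε)]

theorem exists_pos_le_growthRate (hm : 0 < m) (hn : 0 < n) (hRs : 0 < Rstar) (hK : 0 < K)
    (hε : 0 < ε) (hζ0 : 0 < Rstar * m + K * m * xbar - d)
    (hβroot : zeta m n d Rstar K xbar β = 0)
    (hβmax : ∀ y, zeta m n d Rstar K xbar y = 0 → y ≤ β)
    (hL1 : L ≤ 1) (hLβ : min L (xStar m n d Rstar + ε) < β) :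
    ∃ c > 0, ∀ s ∈ Icc 0 L, c ≤ growthRate m n d Rstar K xbar ε s := by
  have hP : (0 : ℝ) < m := by exact_mod_cast hm
  have hN : (0 : ℝ) < n := by exact_mod_cast hn
  obtain ⟨δ, hδ, hζ⟩ :=
    exists_pos_le_quadratic (by nlinarith : -K * n < 0) hζ0 hβroot hβmax hLβ
  refine ⟨min (δ / (m + n)) (Rstar * n * ε / (m + n)), ?_, fun s hs => ?_⟩
  · positivity
  have hD : 0 < (m : ℝ) + n * s := by have := hs.1; positivity
  have hDle : (m : ℝ) + n * s ≤ m + n := by nlinarith [hs.2]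
  by_cases hsε : s < xStar m n d Rstar + ε
  · rw [growthRate_of_lt hD.ne' hsε]
    have hζs := hζ s ⟨hs.1, le_min hs.2 hsε.le⟩
    exact (min_le_left _ _).trans (div_le_div₀ (hδ.le.trans hζs) hζs hD hDle)
  · rw [growthRate_of_le hn hRs.ne' hD.ne' (not_lt.1 hsε)]
    refine (min_le_right _ _).trans (div_le_div₀ ?_ ?_ hD hDle)
    · have : 0 ≤ s - xStar m n d Rstar := by linarith
      positivity
    · gcongr
      linarith

theorem vectorField_nonneg (hm : 0 < m)
    (hφ : ∀ L < 1, ∃ c > 0, ∀ s ∈ Icc 0 L, c ≤ growthRate m n d Rstar K xbar ε s)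
    (hs : s ∈ Icc 0 1) : 0 ≤ vectorField m n d Rstar K xbar ε s := by
  rcases hs.2.lt_or_eq with hs1 | rfl
  · obtain ⟨c, hc, hcφ⟩ := hφ s hs1
    have hs0 := hs.1
    have : 0 < 1 - s := by linarith
    exact mul_nonneg (by positivity) (hc.le.trans (hcφ s ⟨hs0, le_rfl⟩))
  · simp [vectorField]

theorem exists_pos_le_vectorField {a : ℝ} (hm : 0 < m) (ha : 0 < a) (hL : L < 1)
    (hφ : ∃ c > 0, ∀ s ∈ Icc 0 L, c ≤ growthRate m n d Rstar K xbar ε s) :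
    ∃ c > 0, ∀ s ∈ Icc a L, c ≤ vectorField m n d Rstar K xbar ε s := by
  obtain ⟨c, hc, hcφ⟩ := hφ
  have h1L : 0 < 1 - L := by linarith
  refine ⟨a * (1 - L) / (m + n) * c, ?_, fun s hs => ?_⟩
  · positivity
  have hs0 : 0 ≤ s := ha.le.trans hs.1
  have hD : 0 < (m : ℝ) + n * s := by positivity
  have hDle : (m : ℝ) + n * s ≤ m + n := by nlinarith [hs.2]
  have hs1 : 0 ≤ 1 - s := by linarith [hs.2]
  have hfront : a * (1 - L) / (m + n) ≤ s * (1 - s) / (m + n * s) :=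
    div_le_div₀ (mul_nonneg hs0 hs1) (mul_le_mul hs.1 (by linarith [hs.2]) h1L.le hs0) hD hDle
  exact mul_le_mul hfront (hcφ s ⟨hs0, hs.2⟩) hc.le (by positivity)

end ControlledReplicator

theorem stmt_19_general (m n : ℕ) (hm : 0 < m) (hn : 0 < n) (d Rstar K xbar ε β : ℝ)
    (hRs : 0 < Rstar) (hK : 0 < K)
    (h2 : Rstar < d / (m : ℝ))
    (hxbar : 1 / (n : ℝ) * (d / Rstar - m) < xbar)
    (hKgain : (d - Rstar * m) / ((m : ℝ) * xbar) < K)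
    (hβroot : -K * n * β ^ 2 + (K * n * xbar - K * m + Rstar * n) * β
        + (Rstar * m + K * m * xbar - d) = 0)
    (hβmax : ∀ y : ℝ, -K * n * y ^ 2 + (K * n * xbar - K * m + Rstar * n) * y
        + (Rstar * m + K * m * xbar - d) = 0 → y ≤ β)
    (hε : 0 < ε)
    (hε1 : β < 1 → ε < β - 1 / (n : ℝ) * (d / Rstar - m))
    (x : ℝ → ℝ)
    (hmem : ∀ t : ℝ, 0 ≤ t → x t ∈ Set.Icc (0 : ℝ) 1)
    (hode : ∀ t : ℝ, 0 ≤ t →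
      HasDerivAt x
        ((x t * (1 - x t) / ((m : ℝ) + n * x t)) *
          (Rstar + (if x t < 1 / (n : ℝ) * (d / Rstar - m) + ε then K * (xbar - x t) else 0)
            - d / ((m : ℝ) + n * x t))) t)
    (h0 : x 0 ∈ Set.Ioc (0 : ℝ) 1) :
    Filter.Tendsto x Filter.atTop (nhds 1) := by
  open ControlledReplicator in
  have hxbar_pos : 0 < xbar := (xStar_pos hm hn hRs h2).trans hxbar
  have hζ0 : 0 < Rstar * m + K * m * xbar - d := by
    have hP : (0 : ℝ) < m := by exact_mod_cast hm
    have := (div_lt_iff₀ (by positivity : (0 : ℝ) < m * xbar)).1 hKgain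
    linarith
  have hφ : ∀ L < 1, ∃ c > 0, ∀ s ∈ Icc 0 L, c ≤ growthRate m n d Rstar K xbar ε s :=
    fun L hL => exists_pos_le_growthRate hm hn hRs hK hε hζ0 hβroot hβmax hL.le
      (min_xStar_add_lt hε1 hL)
  exact tendsto_of_hasDerivAt_of_pos (f := vectorField m n d Rstar K xbar ε) hmem hode
    (fun s hs => vectorField_nonneg hm hφ hs)
    fun L hL => exists_pos_le_vectorField hm h0.1 hL (hφ L hL)

/-- Proposition 1: Under the gain and ε conditions, every trajectory of the
controlled replicator dynamics ẋ = g(x) on [0,1] with x(0) ∈ (0,1] converges to 1. -/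
theorem stmt_19 (m n : ℕ) (hm : 0 < m) (hn : 0 < n) (d Rstar K xbar ε β : ℝ)
    (hd : 0 < d) (hRs : 0 < Rstar) (hK : 0 < K)
    (h1 : d / ((m : ℝ) + n) < Rstar) (h2 : Rstar < d / (m : ℝ))
    (hxbar : 1 / (n : ℝ) * (d / Rstar - m) < xbar) (hxbar1 : xbar ≤ 1)
    (hKgain : (d - Rstar * m) / ((m : ℝ) * xbar) < K)
    (hβroot : -K * n * β ^ 2 + (K * n * xbar - K * m + Rstar * n) * β
        + (Rstar * m + K * m * xbar - d) = 0)
    (hβmax : ∀ y : ℝ, -K * n * y ^ 2 + (K * n * xbar - K * m + Rstar * n) * y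
        + (Rstar * m + K * m * xbar - d) = 0 → y ≤ β)
    (hε : 0 < ε)
    (hε1 : β < 1 → ε < β - 1 / (n : ℝ) * (d / Rstar - m))
    (hε2 : 1 ≤ β → ε ≤ 1 - 1 / (n : ℝ) * (d / Rstar - m))
    (x : ℝ → ℝ)
    (hmem : ∀ t : ℝ, 0 ≤ t → x t ∈ Set.Icc (0 : ℝ) 1)
    (hode : ∀ t : ℝ, 0 ≤ t →
      HasDerivAt x
        ((x t * (1 - x t) / ((m : ℝ) + n * x t)) *
          (Rstar + (if x t < 1 / (n : ℝ) * (d / Rstar - m) + ε then K * (xbar - x t) else 0)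
            - d / ((m : ℝ) + n * x t))) t)
    (h0 : x 0 ∈ Set.Ioc (0 : ℝ) 1) :
    Filter.Tendsto x Filter.atTop (nhds 1) :=
  stmt_19_general m n hm hn d Rstar K xbar ε β hRs hK h2 hxbar hKgain hβroot hβmax hε hε1 x hmem
    hode h0
end
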